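/- Let ℤ² denote the set of points of ℝ² with both coordinates integers. Then ⋃_{i ≥ 0} Tⁱ(ℤ²) equals the set ℚ² of all points of ℝ² with both coordinates rational. -/

import Mathlib

open Set Filter

noncomputable section

/-- The line through two points in the plane `ℝ × ℝ`. -/
def line (a b : ℝ × ℝ) : AffineSubspace ℝ (ℝ × ℝ) := affineSpan ℝ {a, b}

/-- The intersection operation `T`: the set of all intersection points of pairs of
distinct lines through pairs of distinct points of `S`. -/
def interT (S : Set (ℝ × ℝ)) : Set (ℝ × ℝ) :=
  {x | ∃ a ∈ S, ∃ b ∈ S, ∃ c ∈ S, ∃ d ∈ S,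
    a ≠ b ∧ c ≠ d ∧ line a b ≠ line c d ∧ x ∈ line a b ∧ x ∈ line c d}

/-- The set of points of `ℝ × ℝ` with both coordinates rational. -/
def ratPoints : Set (ℝ × ℝ) := {p | ∃ a b : ℚ, p = ((a : ℝ), (b : ℝ))}

/-- The set of points of `ℝ × ℝ` with both coordinates integral. -/
def intPoints : Set (ℝ × ℝ) := {p | ∃ m n : ℤ, p = ((m : ℝ), (n : ℝ))}

/-! Two lines meet in a point obtained from their defining points by field operations (Cramer's
rule), so `T` preserves `K²` for every subfield `K ⊆ ℝ`; in particular `T(ℚ²) ⊆ ℚ²`, and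
by monotonicity every `Tⁱ(ℤ²)` lies in `ℚ²`. Conversely `ℚ² ⊆ T(ℤ²)`: if `N > 0` clears the
denominators of `x ∈ ℚ²`, then for any integer point `a ≠ x` the point `a + N (x - a)` is an integer
point on the line through `a` and `x`. Taking `a = (0, y)` and `a = (1, y)` for an integer
`y ≠ x.2` gives two such lines, which are distinct since `x` is off the line `ℝ × {y}`. -/

def cross (u v : ℝ × ℝ) : ℝ := u.1 * v.2 - u.2 * v.1

lemma mem_line_iff {a b x : ℝ × ℝ} : x ∈ line a b ↔ ∃ t : ℝ, x = a + t • (b - a) := by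
  simp only [line, mem_affineSpan_pair_iff_exists_lineMap_eq, AffineMap.lineMap_apply,
    vsub_eq_sub, vadd_eq_add, add_comm, eq_comm]

lemma exists_eq_smul_of_cross_eq_zero {u v : ℝ × ℝ} (hu : u ≠ 0) (h : cross u v = 0) :
    ∃ l : ℝ, v = l • u := by
  unfold cross at h
  by_cases hu₁ : u.1 = 0
  · have hu₂ : u.2 ≠ 0 := fun hu₂ => hu (Prod.ext hu₁ hu₂)
    refine ⟨v.2 / u.2, Prod.ext ?_ ?_⟩
    · have : u.2 * v.1 = 0 := by rw [hu₁] at h; linarith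
      simp [hu₁, (mul_eq_zero.mp this).resolve_left hu₂]
    · simp [div_mul_cancel₀ _ hu₂]
  · refine ⟨v.1 / u.1, Prod.ext ?_ ?_⟩
    · simp [div_mul_cancel₀ _ hu₁]
    · simp only [Prod.smul_snd, smul_eq_mul]
      field_simp
      linarith

lemma line_le_line_of_sub_eq_smul {a b c d x : ℝ × ℝ} {l : ℝ} (hv : d - c = l • (b - a))
    (hx : x ∈ line a b) (hx' : x ∈ line c d) : line c d ≤ line a b := by
  obtain ⟨s, rfl⟩ := mem_line_iff.mp hx
  obtain ⟨t, ht⟩ := mem_line_iff.mp hx'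
  have hc : c = a + (s - t * l) • (b - a) :=
    calc c = a + s • (b - a) - t • (d - c) := by rw [ht]; abel
      _ = a + (s - t * l) • (b - a) := by rw [hv]; module
  refine affineSpan_pair_le_of_mem_of_mem (mem_line_iff.mpr ⟨_, hc⟩) (mem_line_iff.mpr ?_)
  exact ⟨s - t * l + l, by rw [add_smul, ← hv, ← add_assoc, ← hc]; abel⟩

lemma cross_ne_zero_of_line_ne {a b c d x : ℝ × ℝ} (hab : a ≠ b) (hcd : c ≠ d)
    (hne : line a b ≠ line c d) (hx : x ∈ line a b) (hx' : x ∈ line c d) :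
    cross (b - a) (d - c) ≠ 0 := by
  intro h
  obtain ⟨l, hl⟩ := exists_eq_smul_of_cross_eq_zero (sub_ne_zero.mpr hab.symm) h
  have h' : cross (d - c) (b - a) = 0 := by unfold cross at h ⊢; linarith
  obtain ⟨l', hl'⟩ := exists_eq_smul_of_cross_eq_zero (sub_ne_zero.mpr hcd.symm) h'
  exact hne (le_antisymm (line_le_line_of_sub_eq_smul hl' hx' hx)
    (line_le_line_of_sub_eq_smul hl hx hx'))

lemma eq_add_cross_div_smul_of_mem_line {a b c d x : ℝ × ℝ} (hx : x ∈ line a b) (hx' : x ∈ line c d)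
    (h : cross (b - a) (d - c) ≠ 0) :
    x = a + (cross (c - a) (d - c) / cross (b - a) (d - c)) • (b - a) := by
  obtain ⟨s, rfl⟩ := mem_line_iff.mp hx
  obtain ⟨t, ht⟩ := mem_line_iff.mp hx'
  have h₁ := congrArg Prod.fst ht
  have h₂ := congrArg Prod.snd ht
  simp only [Prod.fst_add, Prod.snd_add, Prod.smul_fst, Prod.smul_snd, Prod.fst_sub,
    Prod.snd_sub, smul_eq_mul] at h₁ h₂
  congr
  rw [eq_div_iff h]
  unfold cross
  simp only [Prod.fst_sub, Prod.snd_sub]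
  linear_combination (d.2 - c.2) * h₁ - (d.1 - c.1) * h₂

lemma cross_mem {K : Subfield ℝ} {u v : ℝ × ℝ} (hu : u ∈ (K : Set ℝ) ×ˢ K)
    (hv : v ∈ (K : Set ℝ) ×ˢ K) : cross u v ∈ K :=
  sub_mem (mul_mem hu.1 hv.2) (mul_mem hu.2 hv.1)

lemma sub_mem_prod {K : Subfield ℝ} {u v : ℝ × ℝ} (hu : u ∈ (K : Set ℝ) ×ˢ K)
    (hv : v ∈ (K : Set ℝ) ×ˢ K) : u - v ∈ (K : Set ℝ) ×ˢ K :=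
  ⟨sub_mem hu.1 hv.1, sub_mem hu.2 hv.2⟩

lemma interT_subfield_prod_subset (K : Subfield ℝ) :
    interT ((K : Set ℝ) ×ˢ K) ⊆ (K : Set ℝ) ×ˢ K := by
  rintro x ⟨a, ha, b, hb, c, hc, d, hd, hab, hcd, hne, hx, hx'⟩
  rw [eq_add_cross_div_smul_of_mem_line hx hx' (cross_ne_zero_of_line_ne hab hcd hne hx hx')]
  have hr : cross (c - a) (d - c) / cross (b - a) (d - c) ∈ K :=
    div_mem (cross_mem (sub_mem_prod hc ha) (sub_mem_prod hd hc))
      (cross_mem (sub_mem_prod hb ha) (sub_mem_prod hd hc))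
  exact ⟨add_mem ha.1 (mul_mem hr (sub_mem hb.1 ha.1)),
    add_mem ha.2 (mul_mem hr (sub_mem hb.2 ha.2))⟩

lemma ratPoints_eq_prod_fieldRange :
    ratPoints = ((Rat.castHom ℝ).fieldRange : Set ℝ) ×ˢ (Rat.castHom ℝ).fieldRange := by
  ext ⟨x, y⟩
  simp [ratPoints, eq_comm]

lemma interT_ratPoints_subset : interT ratPoints ⊆ ratPoints := by
  rw [ratPoints_eq_prod_fieldRange]
  exact interT_subfield_prod_subset _

lemma interT_mono {S S' : Set (ℝ × ℝ)} (h : S ⊆ S') : interT S ⊆ interT S' := by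
  rintro x ⟨a, ha, b, hb, c, hc, d, hd, hx⟩
  exact ⟨a, h ha, b, h hb, c, h hc, d, h hd, hx⟩

lemma intPoints_subset_ratPoints : intPoints ⊆ ratPoints := by
  rintro p ⟨m, n, rfl⟩
  exact ⟨m, n, by simp⟩

lemma iterate_interT_intPoints_subset_ratPoints (i : ℕ) : interT^[i] intPoints ⊆ ratPoints := by
  induction i with
  | zero => exact intPoints_subset_ratPoints
  | succ i ih =>
    rw [Function.iterate_succ_apply']
    exact (interT_mono ih).trans interT_ratPoints_subset

lemma exists_pos_smul_mem_intPoints {x : ℝ × ℝ} (hx : x ∈ ratPoints) :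
    ∃ N : ℕ, 0 < N ∧ (N : ℝ) • x ∈ intPoints := by
  obtain ⟨p, q, rfl⟩ := hx
  refine ⟨p.den * q.den, by positivity, p.num * q.den, q.num * p.den, ?_⟩
  have hp : (p.den * q.den * p : ℚ) = p.num * q.den := by rw [← p.mul_den_eq_num]; ring
  have hq : (p.den * q.den * q : ℚ) = q.num * p.den := by rw [← q.mul_den_eq_num]; ring
  ext
  · simpa using congrArg (Rat.cast : ℚ → ℝ) hp
  · simpa using congrArg (Rat.cast : ℚ → ℝ) hq

lemma exists_mem_intPoints_mem_line {a x : ℝ × ℝ} (ha : a ∈ intPoints) (hx : x ∈ ratPoints)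
    (hxa : x ≠ a) : ∃ b ∈ intPoints, a ≠ b ∧ x ∈ line a b := by
  obtain ⟨N, hN, m', n', hNx⟩ := exists_pos_smul_mem_intPoints hx
  obtain ⟨m, n, rfl⟩ := ha
  have hN' : (N : ℝ) ≠ 0 := by positivity
  refine ⟨((m : ℝ), (n : ℝ)) + (N : ℝ) • (x - ((m : ℝ), (n : ℝ))),
    ⟨m + m' - N * m, n + n' - N * n, ?_⟩, ?_, mem_line_iff.mpr ⟨(N : ℝ)⁻¹, ?_⟩⟩
  · rw [smul_sub, hNx]; ext <;> simp <;> ring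
  · simpa using smul_ne_zero hN' (sub_ne_zero.mpr hxa)
  · rw [add_sub_cancel_left, inv_smul_smul₀ hN', add_sub_cancel]

lemma ratPoints_subset_interT_intPoints : ratPoints ⊆ interT intPoints := by
  intro x hx
  set y : ℤ := ⌊x.2⌋ + 1
  have hy : x.2 ≠ y := by
    push_cast [y]; exact (Int.lt_floor_add_one x.2).ne
  have hxa : ∀ m : ℤ, x ≠ ((m : ℝ), (y : ℝ)) := fun m h => hy (congrArg Prod.snd h)
  obtain ⟨b₀, hb₀, hne₀, hx₀⟩ := exists_mem_intPoints_mem_line ⟨0, y, rfl⟩ hx (hxa 0)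
  obtain ⟨b₁, hb₁, hne₁, hx₁⟩ := exists_mem_intPoints_mem_line ⟨1, y, rfl⟩ hx (hxa 1)
  refine ⟨_, ⟨0, y, rfl⟩, b₀, hb₀, _, ⟨1, y, rfl⟩, b₁, hb₁, hne₀, hne₁, fun h => hy ?_, hx₀, hx₁⟩
  have ha₁ : (((1 : ℤ) : ℝ), (y : ℝ)) ∈ line (((0 : ℤ) : ℝ), (y : ℝ)) b₀ := by
    rw [h]; exact left_mem_affineSpan_pair ℝ _ _
  have hcol : Collinear ℝ {(((0 : ℤ) : ℝ), (y : ℝ)), (((1 : ℤ) : ℝ), (y : ℝ)), x} :=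
    collinear_triple_of_mem_affineSpan_pair (left_mem_affineSpan_pair ℝ _ _) ha₁ hx₀
  have hx' : x ∈ line (((0 : ℤ) : ℝ), (y : ℝ)) (((1 : ℤ) : ℝ), (y : ℝ)) :=
    hcol.mem_affineSpan_of_mem_of_ne (by simp) (by simp) (by simp) (by simp)
  obtain ⟨t, ht⟩ := mem_line_iff.mp hx'
  simpa using congrArg Prod.snd ht

/-- Iterating `T` on `ℤ²` generates all of `ℚ²`. -/
theorem iUnion_interT_intPoints_eq_ratPoints :
    (⋃ i, interT^[i] intPoints) = ratPoints :=
  (iUnion_subset iterate_interT_intPoints_subset_ratPoints).antisymm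
    (ratPoints_subset_interT_intPoints.trans (subset_iUnion_of_subset 1 subset_rfl))

end
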